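/- Let W ∈ ℝ^{c×r} be a convolutional weight matrix, let γ be the fully connected matrix construction determined by m injective index maps S₁,…,S_m, let Z ∈ ℝ^{d×n} be a fixed input matrix, and let a > 0. For every ε > 0 there exists a finite set U of matrices in ℝ^{cm×n} with cardinality |U| ≤ (1 + 2a√m‖Z‖_F/ε)^{cr} such that for every W with ‖W‖_F ≤ a there is some u ∈ U with ‖γ(W)Z − u‖_F ≤ ε. -/

import Mathlib

/-! Since each `S k` is injective, the `k`-th block of rows of `γ(W) Z` is `W * Z_k` for a row
submatrix `Z_k` of `Z`, so `W ↦ γ(W) Z` is `√m ‖Z‖_F`-Lipschitz for the Frobenius norms. A maximal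
`δ`-separated subset of a ball of radius `a` in a real space of dimension `N` is a `δ`-net, and the
disjoint balls of radius `δ/2` around its points fit in the ball of radius `a + δ/2`, so comparing
volumes bounds its size by `(1 + 2a/δ)^N`. The image of such a net with `δ = ε / (√m ‖Z‖_F)` is
the required cover. -/

open Metric MeasureTheory Module
open scoped NNReal ENNReal

noncomputable def frobNorm {α β : Type*} [Fintype α] [Fintype β] (M : Matrix α β ℝ) : ℝ :=
  Real.sqrt (∑ i, ∑ j, (M i j) ^ 2)

/-- The fully connected matrix `γ(W) ∈ ℝ^{cm×d}` built from a convolutional weight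
`W ∈ ℝ^{c×r}` via `m` index maps `S k : Fin r → Fin d`. -/
noncomputable def gamma {c r d m : ℕ} (S : Fin m → Fin r → Fin d)
    (W : Matrix (Fin c) (Fin r) ℝ) : Matrix (Fin c × Fin m) (Fin d) ℝ :=
  fun ik j => ∑ p, if S ik.2 p = j then W ik.1 p else 0

section FiniteDimensional

variable {E : Type*} [NormedAddCommGroup E] [NormedSpace ℝ E] [FiniteDimensional ℝ E]
  {x : E} {a : ℝ} {δ : ℝ≥0}

theorem Metric.IsSeparated.card_le_of_subset_closedBall {T : Finset E} (ha : 0 ≤ a) (hδ : 0 < δ)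
    (hT : (T : Set E) ⊆ closedBall x a) (hsep : IsSeparated δ (T : Set E)) :
    (T.card : ℝ) ≤ (1 + 2 * a / δ) ^ finrank ℝ E := by
  borelize E
  set μ : Measure E := Measure.addHaar
  have hδ' : (0 : ℝ) < δ := hδ
  have hdisj : (T : Set E).PairwiseDisjoint fun y => ball y (δ / 2) := by
    intro y hy z hz hyz
    refine Set.disjoint_left.2 fun w hwy hwz => ?_
    have hyz' : (δ : ℝ) < dist y z := by
      simpa [edist_dist, ENNReal.ofReal_lt_ofReal_iff_of_nonneg δ.2] using hsep hy hz hyz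
    rw [mem_ball] at hwy hwz
    linarith [dist_triangle y w z, dist_comm w y]
  have hsub : ⋃ y ∈ T, ball y (δ / 2) ⊆ ball x (a + δ / 2) := by
    refine Set.iUnion₂_subset fun y hy w hw => ?_
    rw [mem_ball] at hw ⊢
    linarith [dist_triangle w y x, mem_closedBall.1 (hT hy)]
  have hvol : (T.card : ℝ≥0∞) * μ (ball 0 (δ / 2)) ≤ μ (ball 0 (a + δ / 2)) :=
    calc (T.card : ℝ≥0∞) * μ (ball 0 (δ / 2)) = ∑ y ∈ T, μ (ball y (δ / 2)) := by
          simp [Measure.addHaar_ball_center]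
      _ = μ (⋃ y ∈ T, ball y (δ / 2)) :=
          (measure_biUnion_finset hdisj fun _ _ => measurableSet_ball).symm
      _ ≤ μ (ball x (a + δ / 2)) := measure_mono hsub
      _ = μ (ball 0 (a + δ / 2)) := Measure.addHaar_ball_center μ x _
  rw [Measure.addHaar_ball_of_pos μ _ (r := δ / 2) (by positivity),
    Measure.addHaar_ball_of_pos μ _ (r := a + δ / 2) (by positivity),
    ← mul_assoc, ENNReal.mul_le_mul_iff_left (measure_ball_pos μ 0 one_pos).ne'
      measure_ball_lt_top.ne, ← ENNReal.ofReal_natCast, ← ENNReal.ofReal_mul (by positivity),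
    ENNReal.ofReal_le_ofReal_iff (by positivity)] at hvol
  calc (T.card : ℝ) ≤ (a + δ / 2) ^ finrank ℝ E / (δ / 2) ^ finrank ℝ E :=
        (le_div_iff₀ (by positivity)).2 hvol
    _ = (1 + 2 * a / δ) ^ finrank ℝ E := by
        rw [← div_pow]
        congr 1
        field_simp
        ring

theorem Metric.IsSeparated.encard_le_of_subset_closedBall {C : Set E} (ha : 0 ≤ a) (hδ : 0 < δ)
    (hC : C ⊆ closedBall x a) (hsep : IsSeparated δ C) :
    C.encard ≤ ⌊(1 + 2 * a / δ) ^ finrank ℝ E⌋₊ := by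
  set K := ⌊(1 + 2 * a / δ) ^ finrank ℝ E⌋₊
  have hfinset : ∀ T : Finset E, (T : Set E) ⊆ C → T.card ≤ K := fun T hTC =>
    Nat.le_floor <| (hsep.subset hTC).card_le_of_subset_closedBall ha hδ (hTC.trans hC)
  rcases C.finite_or_infinite with hfin | hinf
  · rw [← hfin.coe_toFinset, Set.encard_coe_eq_coe_finsetCard]
    exact_mod_cast hfinset _ (by simp)
  · obtain ⟨T, hTC, hTcard⟩ := hinf.exists_subset_card_eq (K + 1)
    have := hfinset T hTC
    omega

theorem exists_finset_isCover_closedBall (x : E) (ha : 0 ≤ a) (hδ : 0 < δ) :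
    ∃ U : Finset E, (U.card : ℝ) ≤ (1 + 2 * a / δ) ^ finrank ℝ E ∧
      IsCover δ (closedBall x a) U := by
  have hpack : packingNumber δ (closedBall x a) ≠ ⊤ :=
    ne_top_of_le_ne_top (ENat.natCast_ne_top _) <| iSup₂_le fun _ hC =>
      iSup_le fun hsep => hsep.encard_le_of_subset_closedBall ha hδ hC
  have hfin : (maximalSeparatedSet δ (closedBall x a)).Finite :=
    Set.encard_ne_top_iff.mp (encard_maximalSeparatedSet hpack ▸ hpack)
  refine ⟨hfin.toFinset, ?_, by simpa using isCover_maximalSeparatedSet hpack⟩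
  exact IsSeparated.card_le_of_subset_closedBall ha hδ (by simpa using maximalSeparatedSet_subset)
    (by simpa using isSeparated_maximalSeparatedSet)

theorem LipschitzWith.exists_finset_isCover_image_closedBall {Y : Type*} [PseudoMetricSpace Y]
    {f : E → Y} {K : ℝ≥0} (hf : LipschitzWith K f) (x : E) (ha : 0 ≤ a) {ε : ℝ≥0} (hε : 0 < ε) :
    ∃ U : Finset Y, (U.card : ℝ) ≤ (1 + 2 * a * K / ε) ^ finrank ℝ E ∧
      IsCover ε (f '' closedBall x a) U := by
  classical
  rcases eq_or_ne K 0 with rfl | hK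
  · refine ⟨{f x}, by simp, ?_⟩
    rintro _ ⟨y, -, rfl⟩
    exact ⟨f x, by simp, by simpa using (hf.nndist_le y x).trans (by simp)⟩
  · obtain ⟨V, hVcard, hV⟩ := exists_finset_isCover_closedBall x ha (δ := ε / K) (by positivity)
    refine ⟨V.image f, ?_, ?_⟩
    · calc ((V.image f).card : ℝ) ≤ V.card := by exact_mod_cast Finset.card_image_le
        _ ≤ _ := hVcard
        _ = (1 + 2 * a * K / ε) ^ finrank ℝ E := by
          rw [NNReal.coe_div, div_div_eq_mul_div, mul_assoc, mul_div_assoc]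
    · simpa [mul_div_cancel₀ _ hK] using hV.image_lipschitz hf

end FiniteDimensional

attribute [local instance] Matrix.frobeniusNormedAddCommGroup Matrix.frobeniusNormedSpace

theorem frobNorm_eq_norm {α β : Type*} [Fintype α] [Fintype β] (M : Matrix α β ℝ) :
    frobNorm M = ‖M‖ := by
  simp [frobNorm, Matrix.frobenius_norm_def, Real.sqrt_eq_rpow]

theorem frobNorm_sq {α β : Type*} [Fintype α] [Fintype β] (M : Matrix α β ℝ) :
    frobNorm M ^ 2 = ∑ i, ∑ j, M i j ^ 2 :=
  Real.sq_sqrt (by positivity)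

theorem Matrix.frobenius_norm_submatrix_le {l m n : Type*} [Fintype l] [Fintype m] [Fintype n]
    (A : Matrix m n ℝ) {e : l → m} (he : Function.Injective e) :
    ‖A.submatrix e id‖ ≤ ‖A‖ := by
  simp only [← frobNorm_eq_norm, frobNorm, Matrix.submatrix_apply, id]
  gcongr
  calc ∑ i, ∑ j, A (e i) j ^ 2 = ∑ i ∈ Finset.univ.map ⟨e, he⟩, ∑ j, A i j ^ 2 :=
        (Finset.sum_map _ ⟨e, he⟩ fun i => ∑ j, A i j ^ 2).symm
    _ ≤ ∑ i, ∑ j, A i j ^ 2 := Finset.sum_le_univ_sum_of_nonneg fun _ => by positivity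

section Gamma

variable {c r d m n : ℕ} (S : Fin m → Fin r → Fin d)

theorem gamma_sub (W W' : Matrix (Fin c) (Fin r) ℝ) :
    gamma S (W - W') = gamma S W - gamma S W' := by
  ext ik j
  simp only [gamma, Matrix.sub_apply, ← Finset.sum_sub_distrib]
  exact Finset.sum_congr rfl fun p _ => by split <;> simp

theorem gamma_mul_apply (W : Matrix (Fin c) (Fin r) ℝ) (Z : Matrix (Fin d) (Fin n) ℝ)
    (i : Fin c) (k : Fin m) (j : Fin n) :
    (gamma S W * Z) (i, k) j = (W * Z.submatrix (S k) id) i j := by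
  simp only [gamma, Matrix.mul_apply, Matrix.submatrix_apply, id, Finset.sum_mul, ite_mul,
    zero_mul]
  rw [Finset.sum_comm]
  simp

theorem frobNorm_gamma_mul_sq (W : Matrix (Fin c) (Fin r) ℝ) (Z : Matrix (Fin d) (Fin n) ℝ) :
    frobNorm (gamma S W * Z) ^ 2 = ∑ k, frobNorm (W * Z.submatrix (S k) id) ^ 2 := by
  simp only [frobNorm_sq, Fintype.sum_prod_type, gamma_mul_apply]
  exact Finset.sum_comm

variable {S}

theorem norm_gamma_mul_le (hS : ∀ k, Function.Injective (S k)) (W : Matrix (Fin c) (Fin r) ℝ)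
    (Z : Matrix (Fin d) (Fin n) ℝ) : ‖gamma S W * Z‖ ≤ √m * ‖Z‖ * ‖W‖ := by
  have hblock (k : Fin m) : ‖W * Z.submatrix (S k) id‖ ≤ ‖Z‖ * ‖W‖ :=
    (Matrix.frobenius_norm_mul _ _).trans <| by
      rw [mul_comm]; gcongr; exact Z.frobenius_norm_submatrix_le (hS k)
  refine (pow_le_pow_iff_left₀ (by positivity) (by positivity) two_ne_zero).1 ?_
  calc ‖gamma S W * Z‖ ^ 2 = ∑ k, ‖W * Z.submatrix (S k) id‖ ^ 2 := by
        simpa only [frobNorm_eq_norm] using frobNorm_gamma_mul_sq S W Z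
    _ ≤ ∑ _k : Fin m, (‖Z‖ * ‖W‖) ^ 2 := by gcongr with k; exact hblock k
    _ = (√m * ‖Z‖ * ‖W‖) ^ 2 := by simp [mul_pow]; ring

theorem lipschitzWith_gamma_mul (hS : ∀ k, Function.Injective (S k))
    (Z : Matrix (Fin d) (Fin n) ℝ) :
    LipschitzWith (Real.toNNReal (√m * ‖Z‖)) fun W : Matrix (Fin c) (Fin r) ℝ => gamma S W * Z :=
  LipschitzWith.of_dist_le_mul fun W W' => by
    rw [dist_eq_norm, dist_eq_norm, ← Matrix.sub_mul, ← gamma_sub,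
      Real.coe_toNNReal _ (by positivity)]
    exact norm_gamma_mul_le hS _ _

end Gamma

/-- Covering number bound for a convolutional layer `W ↦ γ(W)Z` with
`‖W‖_F ≤ a`: for every ε > 0 there is a cover of size at most
`(1 + 2a√m‖Z‖_F/ε)^(cr)`. -/
theorem covering_number_conv_layer (c r d m n : ℕ)
    (S : Fin m → Fin r → Fin d) (hS : ∀ k, Function.Injective (S k))
    (Z : Matrix (Fin d) (Fin n) ℝ) (a : ℝ) (ha : 0 < a) :
    ∀ ε > (0 : ℝ), ∃ U : Finset (Matrix (Fin c × Fin m) (Fin n) ℝ),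
      (U.card : ℝ) ≤ (1 + 2 * a * Real.sqrt m * frobNorm Z / ε) ^ (c * r) ∧
      ∀ W : Matrix (Fin c) (Fin r) ℝ, frobNorm W ≤ a →
        ∃ u ∈ U, frobNorm (gamma S W * Z - u) ≤ ε := by
  intro ε hε
  obtain ⟨U, hcard, hcover⟩ := (lipschitzWith_gamma_mul hS Z).exists_finset_isCover_image_closedBall
    0 ha.le (ε := ε.toNNReal) (by simpa using hε)
  have hdim : finrank ℝ (Matrix (Fin c) (Fin r) ℝ) = c * r := by
    rw [Module.finrank_matrix]; simp
  refine ⟨U, ?_, fun W hW => ?_⟩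
  · rw [hdim, Real.coe_toNNReal _ (by positivity), Real.coe_toNNReal _ hε.le] at hcard
    simpa only [frobNorm_eq_norm, mul_assoc] using hcard
  · obtain ⟨u, hu, hdist⟩ := hcover ⟨W, by simpa [frobNorm_eq_norm] using hW, rfl⟩
    refine ⟨u, hu, ?_⟩
    have hdist' : nndist (gamma S W * Z) u ≤ ε.toNNReal := by simpa using hdist
    rw [frobNorm_eq_norm, ← dist_eq_norm, ← Real.coe_toNNReal ε hε.le, ← coe_nndist]
    exact_mod_cast hdist'
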